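/- arXiv:1611.04131 — 3 statements merged into one kernel-verified Lean document; each statement's English description precedes it below -/
import Mathlib

section
/- Let Ω ⊂ ℝ^n be a bounded connected open set, 1 < m ≤ n, and let u be C^2 on an open neighborhood of the closure Ω̄ with u = 0 on ∂Ω. Then the following are equivalent: (a) T_p[u] > 0 on Ω̄ for every p = 1, …, m; (b) T_m[u] > 0 on Ω̄ and u ≤ 0 on Ω̄. -/
open MeasureTheory Finset Filter Topology

/-- `trMinor m S`: sum of all `m×m` principal minors of `S` (the `m`-trace `T_m(S)`). -/
noncomputable def trMinor {ι : Type} [Fintype ι] [DecidableEq ι] (m : ℕ)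
    (S : Matrix ι ι ℝ) : ℝ :=
  ∑ A ∈ Finset.powersetCard m (Finset.univ : Finset ι),
    (S.submatrix (fun i : {x // x ∈ A} => (i : ι)) (fun j : {x // x ∈ A} => (j : ι))).det

/-- Partial derivative in direction `e_i`. -/
noncomputable def pd {n : ℕ} (i : Fin n) (u : (Fin n → ℝ) → ℝ) (x : Fin n → ℝ) : ℝ :=
  fderiv ℝ u x (Pi.single i 1)

/-- Hessian matrix of `u` at `x`. -/
noncomputable def hessian {n : ℕ} (u : (Fin n → ℝ) → ℝ) (x : Fin n → ℝ) :
    Matrix (Fin n) (Fin n) ℝ :=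
  fun i j => pd i (pd j u) x

/-- The `m`-Hessian operator `T_m[u]`. -/
noncomputable def hessOp {n : ℕ} (m : ℕ) (u : (Fin n → ℝ) → ℝ) (x : Fin n → ℝ) : ℝ :=
  trMinor m (hessian u x)

/-- `T_m^{ij}(S)`: partial derivative of the polynomial `S ↦ T_m(S)` in the `(i,j)` entry. -/
noncomputable def trMinorD {ι : Type} [Fintype ι] [DecidableEq ι] (m : ℕ)
    (S : Matrix ι ι ℝ) (i j : ι) : ℝ :=
  deriv (fun t : ℝ => trMinor m (S + t • Matrix.single i j 1)) 0

/-- `T_m^{ij}[u] = (∂T_m/∂s_{ij})(u_xx)`. -/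
noncomputable def hessOpD {n : ℕ} (m : ℕ) (u : (Fin n → ℝ) → ℝ) (x : Fin n → ℝ)
    (i j : Fin n) : ℝ :=
  trMinorD m (hessian u x) i j

/-- Hessian integral `I_p[u] = ∫_Ω (−u) T_p[u] dx`. -/
noncomputable def hessInt {n : ℕ} (p : ℕ) (Ω : Set (Fin n → ℝ)) (u : (Fin n → ℝ) → ℝ) : ℝ :=
  ∫ x in Ω, (-u x) * hessOp p u x

/-- `u` is C² on an open neighborhood of the closure of `Ω`. -/
def C2OnNbhdOfClosure {n : ℕ} (k : ℕ) (Ω : Set (Fin n → ℝ)) (u : (Fin n → ℝ) → ℝ) : Prop :=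
  ∃ V : Set (Fin n → ℝ), IsOpen V ∧ closure Ω ⊆ V ∧ ContDiffOn ℝ k u V

/-- The cone `𝕂̊_m(Ω̄)`. -/
def admCone {n : ℕ} (m : ℕ) (Ω : Set (Fin n → ℝ)) (u : (Fin n → ℝ) → ℝ) : Prop :=
  C2OnNbhdOfClosure 2 Ω u ∧ (∀ x ∈ frontier Ω, u x = 0) ∧
    ∀ p, 1 ≤ p → p ≤ m → ∀ x ∈ closure Ω, 0 < hessOp p u x

/-- smooth compactly supported test function in Ω -/
def testFun {n : ℕ} (Ω : Set (Fin n → ℝ)) (u : (Fin n → ℝ) → ℝ) : Prop :=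
  ContDiff ℝ (⊤ : ℕ∞) u ∧ HasCompactSupport u ∧ tsupport u ⊆ Ω

/-- deleted principal trace: p-trace of S with i-th row/column removed -/
noncomputable def delTr {n : ℕ} (p : ℕ) (S : Matrix (Fin n) (Fin n) ℝ) (i : Fin n) : ℝ :=
  trMinor p (S.submatrix (fun k : {x : Fin n // x ≠ i} => (k : Fin n))
    (fun k : {x : Fin n // x ≠ i} => (k : Fin n)))

/-!
If `T_1[u] = Δu > 0` on `Ω̄`, then `u` has no positive maximum in `Ω`, where the Hessian would
have nonpositive trace; since `u = 0` on `∂Ω`, this gives `u ≤ 0`.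

Conversely, let `T_m[u] > 0` and `u ≤ 0`. For a symmetric matrix `S` the polynomial
`det (t + S) = ∑ₖ Tₖ(S) tⁿ⁻ᵏ` has only real roots; differentiating it `n - m` times (Rolle) shows
that `T_1(S), …, T_m(S) ≥ 0` together with `T_m(S) > 0` forces `T_1(S), …, T_m(S) > 0`. Hence
the set of points of `Ω̄` where `T_1[u], …, T_m[u] > 0` is open and closed in the connected set
`Ω̄`. It is nonempty: `u` attains its minimum over `Ω̄` in `Ω`, and the Hessian is positive
semidefinite there.
-/

open Polynomial

theorem Multiset.esymm_pos {R : Type*} [CommSemiring R] [PartialOrder R] [IsStrictOrderedRing R]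
    {s : Multiset R} (hs : ∀ a ∈ s, 0 < a) {j : ℕ} (hj : j ≤ s.card) : 0 < s.esymm j := by
  have hprod : ∀ t ∈ s.powersetCard j, 0 < t.prod := fun t ht =>
    prod_pos fun a ha => hs a (mem_of_le (mem_powersetCard.1 ht).1 ha)
  obtain ⟨t, ht⟩ : ∃ t, t ∈ s.powersetCard j :=
    card_pos_iff_exists_mem.1 (by rw [card_powersetCard]; exact Nat.choose_pos hj)
  refine (hprod t ht).trans_le (single_le_sum (fun x hx => ?_) _ (mem_map_of_mem _ ht))
  obtain ⟨t', ht', rfl⟩ := mem_map.1 hx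
  exact (hprod t' ht').le

namespace Polynomial

theorem neg_of_mem_roots_of_coeff_nonneg {P : ℝ[X]} (hnn : ∀ j, 0 ≤ P.coeff j) (h0 : 0 < P.coeff 0)
    {r : ℝ} (hr : r ∈ P.roots) : r < 0 := by
  by_contra! hr0
  have hpos : 0 < P.eval r := by
    rw [eval_eq_sum_range]
    calc 0 < P.coeff 0 * r ^ 0 := by simpa using h0
      _ ≤ ∑ i ∈ Finset.range (P.natDegree + 1), P.coeff i * r ^ i :=
        Finset.single_le_sum (f := fun i => P.coeff i * r ^ i)
          (fun i _ => mul_nonneg (hnn i) (pow_nonneg hr0 i)) (by simp)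
  exact hpos.ne' (isRoot_of_mem_roots hr)

theorem coeff_pos_of_coeff_nonneg {P : ℝ[X]} (hroots : P.roots.card = P.natDegree)
    (hnn : ∀ j, 0 ≤ P.coeff j) (h0 : 0 < P.coeff 0) {j : ℕ} (hj : j ≤ P.natDegree) :
    0 < P.coeff j := by
  have hP : P ≠ 0 := fun h => by simp [h] at h0
  have hlead : 0 < P.leadingCoeff := (hnn _).lt_of_ne' (leadingCoeff_ne_zero.2 hP)
  set s := P.roots.map Neg.neg
  have hs : ∀ a ∈ s, 0 < a := by
    intro a ha
    obtain ⟨r, hr, rfl⟩ := Multiset.mem_map.1 ha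
    exact neg_pos.2 (neg_of_mem_roots_of_coeff_nonneg hnn h0 hr)
  have hfactor : P = C P.leadingCoeff * (s.map fun a => X + C a).prod := by
    conv_lhs => rw [← C_leadingCoeff_mul_prod_multiset_X_sub_C hroots]
    simp [s, Multiset.map_map, sub_eq_add_neg]
  have hcard : s.card = P.natDegree := by simp [s, hroots]
  rw [hfactor, coeff_C_mul, Multiset.prod_X_add_C_coeff s (hcard ▸ hj)]
  exact mul_pos hlead (Multiset.esymm_pos hs (Nat.sub_le _ _))

theorem card_roots_derivative_eq_natDegree {P : ℝ[X]} (h : P.roots.card = P.natDegree) :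
    (derivative P).roots.card = (derivative P).natDegree := by
  have := card_roots_le_derivative P
  have := natDegree_derivative_le P
  have := card_roots' (derivative P)
  omega

theorem card_roots_iterate_derivative_eq_natDegree {P : ℝ[X]} (h : P.roots.card = P.natDegree)
    (k : ℕ) :
    (derivative^[k] P).roots.card = (derivative^[k] P).natDegree := by
  induction k with
  | zero => exact h
  | succ k ih =>
    rw [Function.iterate_succ_apply']
    exact card_roots_derivative_eq_natDegree ih

theorem coeff_natDegree_sub_pos_of_nonneg {P : ℝ[X]} (hroots : P.roots.card = P.natDegree)
    (hlead : 0 < P.leadingCoeff) {m : ℕ} (hm : m ≤ P.natDegree)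
    (hnn : ∀ p, 0 < p → p ≤ m → 0 ≤ P.coeff (P.natDegree - p))
    (hpos : 0 < P.coeff (P.natDegree - m)) {p : ℕ} (hp : p ≤ m) :
    0 < P.coeff (P.natDegree - p) := by
  set n := P.natDegree
  -- `Q` is real-rooted by Rolle, and its coefficients are positive multiples of the
  -- coefficients of `P` of index at least `n - m`.
  set Q := derivative^[n - m] P
  have hQcoeff : ∀ j ≤ m, ∃ c : ℝ, 0 < c ∧ Q.coeff j = c * P.coeff (n - (m - j)) := by
    intro j hj
    refine ⟨(j + (n - m)).descFactorial (n - m),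
      by exact_mod_cast Nat.descFactorial_pos.2 (by omega), ?_⟩
    rw [coeff_iterate_derivative, nsmul_eq_mul, show j + (n - m) = n - (m - j) by omega]
  have hQnn : ∀ j, 0 ≤ Q.coeff j := by
    intro j
    rcases lt_trichotomy j m with hj | rfl | hj
    · obtain ⟨c, hc, hQj⟩ := hQcoeff j hj.le
      exact hQj ▸ mul_nonneg hc.le (hnn (m - j) (by omega) (by omega))
    · obtain ⟨c, hc, hQj⟩ := hQcoeff j le_rfl
      rw [hQj, Nat.sub_self, Nat.sub_zero]
      exact mul_nonneg hc.le hlead.le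
    · exact (coeff_eq_zero_of_natDegree_lt
        ((natDegree_iterate_derivative P _).trans_lt (by omega))).ge
  have hQdeg : Q.natDegree = m := by
    refine le_antisymm ((natDegree_iterate_derivative P _).trans (by omega))
      (le_natDegree_of_ne_zero ?_)
    obtain ⟨c, hc, hQm⟩ := hQcoeff m le_rfl
    rw [hQm, Nat.sub_self, Nat.sub_zero]
    exact (mul_pos hc hlead).ne'
  have hQ0 : 0 < Q.coeff 0 := by
    obtain ⟨c, hc, hQ0⟩ := hQcoeff 0 (Nat.zero_le _)
    rw [hQ0, Nat.sub_zero]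
    exact mul_pos hc hpos
  have hQpos : 0 < Q.coeff (m - p) :=
    coeff_pos_of_coeff_nonneg (card_roots_iterate_derivative_eq_natDegree hroots _) hQnn hQ0
      (hQdeg.symm ▸ Nat.sub_le m p)
  obtain ⟨c, hc, hQp⟩ := hQcoeff (m - p) (Nat.sub_le _ _)
  rw [hQp, Nat.sub_sub_self hp] at hQpos
  exact pos_of_mul_pos_right hQpos hc.le

end Polynomial

section TrMinor

variable {ι : Type} [Fintype ι] [DecidableEq ι]

theorem coeff_charpoly_neg_eq_trMinor (S : Matrix ι ι ℝ) {k : ℕ} (hk : k ≤ Fintype.card ι) :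
    (-S).charpoly.coeff (Fintype.card ι - k) = trMinor k S := by
  rw [Matrix.charpoly_coeff_eq_sum_minors _ _ hk, trMinor, Finset.mul_sum]
  refine Finset.sum_congr rfl fun A hA => ?_
  change (-1) ^ k * (-S.submatrix Subtype.val Subtype.val).det = _
  rw [Matrix.det_neg, Fintype.card_coe, (mem_powersetCard.1 hA).2, ← mul_assoc, ← mul_pow,
    neg_one_mul, neg_neg, one_pow, one_mul]

theorem trMinor_pos_of_nonneg {S : Matrix ι ι ℝ} (hS : S.IsHermitian) {m : ℕ}
    (hm : m ≤ Fintype.card ι) (hnn : ∀ p ∈ Icc 1 m, 0 ≤ trMinor p S) (hpos : 0 < trMinor m S) :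
    ∀ p ∈ Icc 1 m, 0 < trMinor p S := by
  have hdeg := (-S).charpoly_natDegree_eq_dim
  have hroots : (-S).charpoly.roots.card = (-S).charpoly.natDegree := by
    rw [hS.neg.roots_charpoly_eq_eigenvalues, hdeg, Multiset.card_map, card_val, card_univ]
  have hcoeff : ∀ p ≤ m, (-S).charpoly.coeff ((-S).charpoly.natDegree - p) = trMinor p S :=
    fun p hp => by rw [hdeg, coeff_charpoly_neg_eq_trMinor S (hp.trans hm)]
  intro p hp
  rw [← hcoeff p (mem_Icc.1 hp).2]
  refine coeff_natDegree_sub_pos_of_nonneg hroots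
    (by rw [(-S).charpoly_monic.leadingCoeff]; exact one_pos) (hdeg ▸ hm)
    (fun q hq hqm => ?_) (by rwa [hcoeff m le_rfl]) (mem_Icc.1 hp).2
  rw [hcoeff q hqm]
  exact hnn q (mem_Icc.2 ⟨hq, hqm⟩)

theorem trMinor_nonneg_of_posSemidef {S : Matrix ι ι ℝ} (hS : S.PosSemidef) (p : ℕ) :
    0 ≤ trMinor p S :=
  Finset.sum_nonneg fun _ _ => (hS.submatrix _).det_nonneg

theorem trMinor_one (S : Matrix ι ι ℝ) : trMinor 1 S = S.trace := by
  rw [trMinor, powersetCard_one, sum_map]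
  refine Finset.sum_congr rfl fun i _ => ?_
  let _ : Unique {x // x ∈ ({i} : Finset ι)} :=
    ⟨⟨⟨i, mem_singleton_self i⟩⟩, fun a => Subtype.ext (mem_singleton.1 a.2)⟩
  rw [Matrix.det_unique]
  rfl

theorem continuous_trMinor (p : ℕ) : Continuous (trMinor p : Matrix ι ι ℝ → ℝ) :=
  continuous_finsetSum _ fun _ _ => (continuous_id.matrix_submatrix _ _).matrix_det

end TrMinor

section Calculus

variable {E : Type*} [NormedAddCommGroup E] [NormedSpace ℝ E]

theorem IsLocalMin.deriv_deriv_nonneg {f : ℝ → ℝ} {a : ℝ} (h : IsLocalMin f a)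
    (hc : ContinuousAt f a) : 0 ≤ deriv (deriv f) a := by
  -- Otherwise the second derivative test makes `a` a local maximum too, so `f` is locally constant.
  by_contra! hneg
  have hconst : f =ᶠ[𝓝 a] fun _ => f a :=
    (h.and (isLocalMax_of_deriv_deriv_neg hneg h.deriv_eq_zero hc)).mono fun x hx =>
      le_antisymm hx.2 hx.1
  have hderiv : deriv f =ᶠ[𝓝 a] fun _ => 0 :=
    hconst.eventuallyEq_nhds.mono fun x hx => by rw [hx.deriv_eq, deriv_const]
  rw [hderiv.deriv_eq, deriv_const] at hneg
  exact hneg.false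

theorem IsLocalMax.deriv_deriv_nonpos {f : ℝ → ℝ} {a : ℝ} (h : IsLocalMax f a)
    (hc : ContinuousAt f a) : deriv (deriv f) a ≤ 0 := by
  simpa using h.neg.deriv_deriv_nonneg hc.neg

theorem hasDerivAt_deriv_comp_add_smul {u : E → ℝ} {z : E} (hu : ContDiffAt ℝ 2 u z) (v : E) :
    HasDerivAt (deriv fun t : ℝ => u (z + t • v)) (fderiv ℝ (fderiv ℝ u) z v v) 0 := by
  have hline : ∀ t : ℝ, HasDerivAt (fun s : ℝ => z + s • v) v t := fun t => by
    simpa using ((hasDerivAt_id t).smul_const v).const_add z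
  have htend : Tendsto (fun t : ℝ => z + t • v) (𝓝 0) (𝓝 z) := by
    simpa using (hline 0).continuousAt.tendsto
  have hderiv : deriv (fun t => u (z + t • v)) =ᶠ[𝓝 (0 : ℝ)]
      fun t => fderiv ℝ u (z + t • v) v :=
    (htend.eventually (hu.eventually (by simp))).mono fun t ht =>
      ((ht.differentiableAt (by norm_num)).hasFDerivAt.comp_hasDerivAt t (hline t)).deriv
  refine HasDerivAt.congr_of_eventuallyEq ?_ hderiv
  have hu' : HasFDerivAt (fderiv ℝ u) (fderiv ℝ (fderiv ℝ u) z) (z + (0 : ℝ) • v) := by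
    simpa using ((hu.fderiv_right (m := 1) (by norm_num)).differentiableAt one_ne_zero).hasFDerivAt
  exact (ContinuousLinearMap.apply ℝ ℝ v).hasFDerivAt.comp_hasDerivAt 0
    (hu'.comp_hasDerivAt 0 (hline 0))

theorem IsLocalMin.fderiv_fderiv_nonneg {u : E → ℝ} {z : E} (h : IsLocalMin u z)
    (hu : ContDiffAt ℝ 2 u z) (v : E) : 0 ≤ fderiv ℝ (fderiv ℝ u) z v v := by
  rw [← (hasDerivAt_deriv_comp_add_smul hu v).deriv]
  have hline : ContinuousAt (fun t : ℝ => z + t • v) 0 := by fun_prop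
  have h' : IsLocalMin u ((fun t : ℝ => z + t • v) 0) := by simpa using h
  exact (h'.comp_continuous (g := fun t : ℝ => z + t • v) (b := 0) hline).deriv_deriv_nonneg
    (hu.continuousAt.comp_of_eq hline (by simp))

theorem IsLocalMax.fderiv_fderiv_nonpos {u : E → ℝ} {z : E} (h : IsLocalMax u z)
    (hu : ContDiffAt ℝ 2 u z) (v : E) : fderiv ℝ (fderiv ℝ u) z v v ≤ 0 := by
  rw [← (hasDerivAt_deriv_comp_add_smul hu v).deriv]
  have hline : ContinuousAt (fun t : ℝ => z + t • v) 0 := by fun_prop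
  have h' : IsLocalMax u ((fun t : ℝ => z + t • v) 0) := by simpa using h
  exact (h'.comp_continuous (g := fun t : ℝ => z + t • v) (b := 0) hline).deriv_deriv_nonpos
    (hu.continuousAt.comp_of_eq hline (by simp))

end Calculus

section Hessian

open Matrix

variable {n : ℕ} {u : (Fin n → ℝ) → ℝ} {x : Fin n → ℝ}

theorem hessian_apply (hu : ContDiffAt ℝ 2 u x) (i j : Fin n) :
    hessian u x i j = fderiv ℝ (fderiv ℝ u) x (Pi.single i 1) (Pi.single j 1) := by
  have hdiff : DifferentiableAt ℝ (fderiv ℝ u) x :=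
    (hu.fderiv_right (m := 1) (by norm_num)).differentiableAt one_ne_zero
  show fderiv ℝ (fun y => fderiv ℝ u y (Pi.single j 1)) x (Pi.single i 1) = _
  rw [fderiv_clm_apply hdiff (differentiableAt_const _)]
  simp

theorem isHermitian_hessian (hu : ContDiffAt ℝ 2 u x) : (hessian u x).IsHermitian := by
  ext i j
  simp only [Matrix.conjTranspose_apply, star_trivial, hessian_apply hu]
  exact hu.isSymmSndFDerivAt (by simp) _ _

theorem dotProduct_hessian_mulVec (hu : ContDiffAt ℝ 2 u x) (v : Fin n → ℝ) :
    v ⬝ᵥ (hessian u x *ᵥ v) = fderiv ℝ (fderiv ℝ u) x v v := by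
  have hsingle : ∀ i, (Pi.single i (v i) : Fin n → ℝ) = v i • Pi.single i 1 := fun i => by
    rw [← Pi.single_smul, smul_eq_mul, mul_one]
  conv_rhs => rw [← Finset.univ_sum_single v]
  simp only [dotProduct, mulVec, hessian_apply hu, Finset.mul_sum, map_sum, hsingle, map_smul,
    FunLike.coe_sum, FunLike.coe_smul, Finset.sum_apply, Pi.smul_apply, smul_eq_mul]
  rw [Finset.sum_comm]
  exact Finset.sum_congr rfl fun i _ => Finset.sum_congr rfl fun j _ => by ring

theorem IsLocalMin.posSemidef_hessian (h : IsLocalMin u x) (hu : ContDiffAt ℝ 2 u x) :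
    (hessian u x).PosSemidef :=
  .of_dotProduct_mulVec_nonneg (isHermitian_hessian hu) fun v => by
    simpa [dotProduct_hessian_mulVec hu] using h.fderiv_fderiv_nonneg hu v

theorem IsLocalMax.trace_hessian_nonpos (h : IsLocalMax u x) (hu : ContDiffAt ℝ 2 u x) :
    (hessian u x).trace ≤ 0 :=
  Finset.sum_nonpos fun i _ => by
    simpa [hessian_apply hu] using h.fderiv_fderiv_nonpos hu (Pi.single i 1)

theorem continuousOn_hessian {V : Set (Fin n → ℝ)} (hV : IsOpen V) (hu : ContDiffOn ℝ 2 u V) :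
    ContinuousOn (hessian u) V := by
  have hcont : ContinuousOn (fderiv ℝ (fderiv ℝ u)) V :=
    (hu.fderiv_of_isOpen hV (m := 1) (by norm_num)).continuousOn_fderiv_of_isOpen hV le_rfl
  refine continuousOn_pi.2 fun i => continuousOn_pi.2 fun j => ?_
  refine ((hcont.clm_apply (continuousOn_const (c := Pi.single i 1))).clm_apply
    (continuousOn_const (c := Pi.single j 1))).congr fun y hy => ?_
  exact hessian_apply (hu.contDiffAt (hV.mem_nhds hy)) i j

end Hessian

theorem IsPreconnected.forall_pos_of_nonneg_imp_pos {X ι : Type*} [TopologicalSpace X]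
    {K V : Set X} {s : Finset ι} {f : ι → X → ℝ} (hK : IsPreconnected K) (hV : IsOpen V)
    (hKV : K ⊆ V) (hf : ∀ i ∈ s, ContinuousOn (f i) V)
    (hgap : ∀ x ∈ K, (∀ i ∈ s, 0 ≤ f i x) → ∀ i ∈ s, 0 < f i x)
    {x₀ : X} (hx₀ : x₀ ∈ K) (h₀ : ∀ i ∈ s, 0 < f i x₀) : ∀ x ∈ K, ∀ i ∈ s, 0 < f i x := by
  set U := ⋂ i ∈ s, V ∩ f i ⁻¹' Set.Ioi 0
  set W := ⋃ i ∈ s, V ∩ f i ⁻¹' Set.Iio 0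
  have hU : IsOpen U :=
    isOpen_biInter_finset fun i hi => (hf i hi).isOpen_inter_preimage hV isOpen_Ioi
  have hW : IsOpen W :=
    isOpen_biUnion fun i hi => (hf i hi).isOpen_inter_preimage hV isOpen_Iio
  have hmemU : ∀ x ∈ K, (∀ i ∈ s, 0 < f i x) → x ∈ U := fun x hx hpos =>
    Set.mem_iInter₂.2 fun i hi => ⟨hKV hx, hpos i hi⟩
  have hdisj : Disjoint U W := Set.disjoint_left.2 fun x hxU hxW => by
    obtain ⟨i, hi, -, hneg⟩ := Set.mem_iUnion₂.1 hxW
    have hpos : 0 < f i x := (Set.mem_iInter₂.1 hxU i hi).2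
    exact hpos.not_gt hneg
  have hcover : K ⊆ U ∪ W := fun x hx => by
    by_cases hnn : ∀ i ∈ s, 0 ≤ f i x
    · exact Or.inl (hmemU x hx (hgap x hx hnn))
    · obtain ⟨i, hi, hneg⟩ : ∃ i ∈ s, f i x < 0 := by simpa using hnn
      exact Or.inr (Set.mem_iUnion₂.2 ⟨i, hi, hKV hx, hneg⟩)
  have hKU := hK.subset_left_of_subset_union hU hW hdisj hcover ⟨x₀, hx₀, hmemU x₀ hx₀ h₀⟩
  exact fun x hx i hi => (Set.mem_iInter₂.1 (hKU hx) i hi).2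

theorem exists_mem_isMaxOn_closure {E : Type*} [PseudoMetricSpace E] [ProperSpace E]
    {Ω : Set E} {u : E → ℝ} (hΩo : IsOpen Ω) (hΩb : Bornology.IsBounded Ω)
    (hu : ContinuousOn u (closure Ω)) (hu0 : ∀ x ∈ frontier Ω, u x = 0) {x₀ : E}
    (hx₀ : x₀ ∈ Ω) (hux₀ : 0 ≤ u x₀) : ∃ z ∈ Ω, IsMaxOn u (closure Ω) z := by
  obtain ⟨z, hz, hmax⟩ := hΩb.isCompact_closure.exists_isMaxOn ⟨x₀, subset_closure hx₀⟩ hu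
  by_cases hzΩ : z ∈ Ω
  · exact ⟨z, hzΩ, hmax⟩
  · have huz : u z = 0 := hu0 z ⟨hz, by rwa [hΩo.interior_eq]⟩
    exact ⟨x₀, hx₀, fun y hy => (hmax hy).trans (huz.trans_le hux₀)⟩

theorem C2OnNbhdOfClosure.contDiffAt {n k : ℕ} {Ω : Set (Fin n → ℝ)} {u : (Fin n → ℝ) → ℝ}
    (hu : C2OnNbhdOfClosure k Ω u) {x : Fin n → ℝ} (hx : x ∈ closure Ω) : ContDiffAt ℝ k u x :=
  let ⟨_, hV, hΩV, huV⟩ := hu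
  huV.contDiffAt (hV.mem_nhds (hΩV hx))

theorem C2OnNbhdOfClosure.continuousOn {n k : ℕ} {Ω : Set (Fin n → ℝ)} {u : (Fin n → ℝ) → ℝ}
    (hu : C2OnNbhdOfClosure k Ω u) : ContinuousOn u (closure Ω) :=
  fun _ hx => (hu.contDiffAt hx).continuousAt.continuousWithinAt

section Cone

variable {n : ℕ} {Ω : Set (Fin n → ℝ)} {u : (Fin n → ℝ) → ℝ}

theorem nonpos_of_hessOp_one_pos (hΩo : IsOpen Ω) (hΩb : Bornology.IsBounded Ω)
    (hu : C2OnNbhdOfClosure 2 Ω u) (hu0 : ∀ x ∈ frontier Ω, u x = 0)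
    (hT : ∀ x ∈ closure Ω, 0 < hessOp 1 u x) : ∀ x ∈ closure Ω, u x ≤ 0 := by
  intro x hx
  by_contra! hux
  have hxΩ : x ∈ Ω := by
    by_contra hxΩ
    exact hux.ne' (hu0 x ⟨hx, by rwa [hΩo.interior_eq]⟩)
  obtain ⟨z, hzΩ, hzmax⟩ := exists_mem_isMaxOn_closure hΩo hΩb hu.continuousOn hu0 hxΩ hux.le
  have hz : z ∈ closure Ω := subset_closure hzΩ
  have hmax : IsLocalMax u z :=
    hzmax.isLocalMax (Filter.mem_of_superset (hΩo.mem_nhds hzΩ) subset_closure)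
  have hTz := hT z hz
  rw [hessOp, trMinor_one] at hTz
  exact hTz.not_ge (hmax.trace_hessian_nonpos (hu.contDiffAt hz))

theorem forall_hessOp_pos_of_nonpos {m : ℕ} (hΩo : IsOpen Ω) (hΩb : Bornology.IsBounded Ω)
    (hΩc : IsConnected Ω) (hu : C2OnNbhdOfClosure 2 Ω u) (hu0 : ∀ x ∈ frontier Ω, u x = 0)
    (hmn : m ≤ n) (hT : ∀ x ∈ closure Ω, 0 < hessOp m u x)
    (hle : ∀ x ∈ closure Ω, u x ≤ 0) : ∀ x ∈ closure Ω, ∀ p ∈ Icc 1 m, 0 < hessOp p u x := by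
  obtain ⟨V, hVo, hΩV, huV⟩ := id hu
  obtain ⟨x₀, hx₀⟩ := hΩc.nonempty
  obtain ⟨z, hzΩ, hzmin⟩ := exists_mem_isMaxOn_closure (u := fun x => -u x) hΩo hΩb
    hu.continuousOn.neg (fun x hx => by simp [hu0 x hx]) hx₀
    (neg_nonneg.2 (hle x₀ (subset_closure hx₀)))
  have hz : z ∈ closure Ω := subset_closure hzΩ
  have hmin : IsLocalMin u z := by
    simpa using (hzmin.isLocalMax (Filter.mem_of_superset (hΩo.mem_nhds hzΩ) subset_closure)).neg
  have hgap : ∀ x ∈ closure Ω, (∀ p ∈ Icc 1 m, 0 ≤ hessOp p u x) →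
      ∀ p ∈ Icc 1 m, 0 < hessOp p u x := fun x hx hnn =>
    trMinor_pos_of_nonneg (isHermitian_hessian (hu.contDiffAt hx)) (by simpa using hmn) hnn
      (hT x hx)
  exact hΩc.closure.isPreconnected.forall_pos_of_nonneg_imp_pos hVo hΩV
    (fun p _ => (continuous_trMinor p).comp_continuousOn (continuousOn_hessian hVo huV)) hgap hz
    (hgap z hz fun p _ =>
      trMinor_nonneg_of_posSemidef (hmin.posSemidef_hessian (hu.contDiffAt hz)) p)

end Cone

/-- coincidence of the two descriptions of the cone of m-admissible
functions vanishing on the boundary. -/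
theorem stmt_3 (n m : ℕ) (hm1 : 1 < m) (hmn : m ≤ n)
    (Ω : Set (Fin n → ℝ)) (hΩo : IsOpen Ω) (hΩb : Bornology.IsBounded Ω)
    (hΩc : IsConnected Ω)
    (u : (Fin n → ℝ) → ℝ) (hu : C2OnNbhdOfClosure 2 Ω u)
    (hu0 : ∀ x ∈ frontier Ω, u x = 0) :
    (∀ p, 1 ≤ p → p ≤ m → ∀ x ∈ closure Ω, 0 < hessOp p u x) ↔
      ((∀ x ∈ closure Ω, 0 < hessOp m u x) ∧ ∀ x ∈ closure Ω, u x ≤ 0) := by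
  constructor
  · intro hT
    exact ⟨hT m hm1.le le_rfl,
      nonpos_of_hessOp_one_pos hΩo hΩb hu hu0 (hT 1 le_rfl hm1.le)⟩
  · rintro ⟨hT, hle⟩ p hp hpm x hx
    exact forall_hessOp_pos_of_nonpos hΩo hΩb hΩc hu hu0 hmn hT hle x hx p (mem_Icc.2 ⟨hp, hpm⟩)
end

section
/- Let Ω ⊂ ℝ^n be a bounded open set, 1 ≤ p ≤ n, and let u be C^2 on an open neighborhood of the closure Ω̄ with u = 0 on ∂Ω and I_p[u] = 1. Then the first variation of I_p at u is nonzero: there exists a smooth function h with compact support in Ω such that ∫_Ω h · T_p[u] dx ≠ 0 (equivalently, δI_p[u](h) = −(p+1)∫_Ω h T_p[u] dx ≠ 0). -/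
open MeasureTheory Finset Filter Topology

lemma hessOp_continuousOn {n : ℕ} (m : ℕ) (u : (Fin n → ℝ) → ℝ) (V : Set (Fin n → ℝ))
    (hVo : IsOpen V) (hV2 : ContDiffOn ℝ 2 u V) : ContinuousOn (hessOp m u) V := by
  have h1 : ContDiffOn ℝ 1 (fderiv ℝ u) V := hV2.fderiv_of_isOpen hVo (by norm_num)
  have hpd : ∀ j : Fin n, ContDiffOn ℝ 1 (pd j u) V := by
    intro j
    have := ((ContinuousLinearMap.apply ℝ ℝ (Pi.single j 1 : Fin n → ℝ)).contDiff.comp_contDiffOn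
      h1 : ContDiffOn ℝ 1 (fun x => fderiv ℝ u x (Pi.single j 1)) V)
    exact this
  have hhess : ∀ i j : Fin n, ContinuousOn (fun x => hessian u x i j) V := by
    intro i j
    have h2 := (hpd j).continuousOn_fderiv_of_isOpen hVo le_rfl
    exact ((ContinuousLinearMap.apply ℝ ℝ (Pi.single i 1 : Fin n → ℝ)).continuous.comp_continuousOn
      h2 : ContinuousOn (fun x => fderiv ℝ (pd j u) x (Pi.single i 1)) V)
  unfold hessOp trMinor
  apply continuousOn_finset_sum
  intro A _
  refine (Continuous.matrix_det continuous_id).comp_continuousOn ?_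
  apply continuousOn_pi.2
  intro i
  apply continuousOn_pi.2
  intro j
  exact hhess _ _

/-- the first variation of `I_p` is nonzero at any `u` with `I_p[u] = 1`. -/
theorem stmt_5 (n p : ℕ) (hp1 : 1 ≤ p) (hpn : p ≤ n)
    (Ω : Set (Fin n → ℝ)) (hΩo : IsOpen Ω) (hΩb : Bornology.IsBounded Ω)
    (u : (Fin n → ℝ) → ℝ) (hu : C2OnNbhdOfClosure 2 Ω u)
    (hu0 : ∀ x ∈ frontier Ω, u x = 0)
    (hI : hessInt p Ω u = 1) :
    ∃ h : (Fin n → ℝ) → ℝ, testFun Ω h ∧ (∫ x in Ω, h x * hessOp p u x) ≠ 0 := by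
  classical
  obtain ⟨V, hVo, hVc, hV2⟩ := hu
  -- there is a point of Ω where hessOp is nonzero
  have hx : ∃ x₀ ∈ Ω, hessOp p u x₀ ≠ 0 := by
    by_contra hc
    push_neg at hc
    have : hessInt p Ω u = 0 := by
      unfold hessInt
      exact setIntegral_eq_zero_of_forall_eq_zero fun x hx => by rw [hc x hx, mul_zero]
    rw [hI] at this; norm_num at this
  obtain ⟨x₀, hx₀, hc0⟩ := hx
  set T : (Fin n → ℝ) → ℝ := hessOp p u with hT
  set c : ℝ := T x₀ with hcdef
  have hTcont : ContinuousOn T V := hessOp_continuousOn p u V hVo hV2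
  have hx₀V : x₀ ∈ V := hVc (subset_closure hx₀)
  have hTat : ContinuousAt T x₀ := hTcont.continuousAt (hVo.mem_nhds hx₀V)
  have hcpos : 0 < |c| / 2 := by positivity
  obtain ⟨δ, hδ, hδprop⟩ := Metric.continuousAt_iff.1 hTat (|c| / 2) hcpos
  obtain ⟨r', hr', hball'⟩ := Metric.isOpen_iff.1 (hΩo.inter hVo) x₀ ⟨hx₀, hx₀V⟩
  set r : ℝ := min δ r' with hrdef
  have hr : 0 < r := lt_min hδ hr'
  have hballΩ : Metric.ball x₀ r ⊆ Ω ∩ V :=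
    (Metric.ball_subset_ball (min_le_right _ _)).trans hball'
  set s : ℝ := if 0 < c then 1 else -1 with hsdef
  have hball_lb : ∀ y ∈ Metric.ball x₀ r, |c| / 2 ≤ s * T y := by
    intro y hy
    have hdy : dist y x₀ < δ := lt_of_lt_of_le (Metric.mem_ball.1 hy) (min_le_left _ _)
    have h1 : |T y - c| < |c| / 2 := hδprop hdy
    rcases lt_trichotomy c 0 with h | h | h
    · have hs : s = -1 := by simp [hsdef, not_lt.2 h.le]
      rw [hs, abs_of_neg h] at *
      rw [abs_lt] at h1; linarith
    · exact absurd h hc0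
    · have hs : s = 1 := by simp [hsdef, h]
      rw [hs, abs_of_pos h] at *
      rw [abs_lt] at h1; linarith
  -- bump function
  set φ : ContDiffBump x₀ := ⟨r / 4, r / 2, by positivity, by linarith⟩ with hφdef
  have htsupp : tsupport φ = Metric.closedBall x₀ (r / 2) := φ.tsupport_eq
  have hKball : Metric.closedBall x₀ (r / 2) ⊆ Metric.ball x₀ r :=
    Metric.closedBall_subset_ball (by linarith)
  have hKΩ : Metric.closedBall x₀ (r / 2) ⊆ Ω := fun y hy => (hballΩ (hKball hy)).1
  refine ⟨φ, ⟨φ.contDiff, φ.hasCompactSupport, htsupp ▸ hKΩ⟩, ?_⟩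
  set K : Set (Fin n → ℝ) := Metric.closedBall x₀ (r / 2) with hKdef
  set K' : Set (Fin n → ℝ) := Metric.closedBall x₀ (r / 4) with hK'def
  have hred : (∫ x in Ω, φ x * T x) = ∫ x in K, φ x * T x := by
    refine setIntegral_eq_of_subset_of_forall_diff_eq_zero hΩo.measurableSet hKΩ ?_
    intro x hx
    have : φ x = 0 := image_eq_zero_of_notMem_tsupport (by rw [htsupp]; exact hx.2)
    rw [this, zero_mul]
  have hint : IntegrableOn (fun x => φ x * (s * T x)) K := by
    apply ContinuousOn.integrableOn_compact (isCompact_closedBall _ _)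
    exact (φ.continuous.continuousOn).mul (continuousOn_const.mul
      (hTcont.mono (fun y hy => (hballΩ (hKball hy)).2)))
  have hnonneg : ∀ x ∈ K, 0 ≤ φ x * (s * T x) := fun x hx =>
    mul_nonneg φ.nonneg (le_trans hcpos.le (hball_lb x (hKball hx)))
  have hlow : |c| / 2 * (volume K').toReal ≤ ∫ x in K', φ x * (s * T x) := by
    refine setIntegral_ge_of_const_le_real measurableSet_closedBall
      (measure_closedBall_lt_top).ne ?_ (hint.mono_set ?_)
    · intro x hx
      have h1 : φ x = 1 := φ.one_of_mem_closedBall hx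
      rw [h1, one_mul]
      exact hball_lb x (hKball (Metric.closedBall_subset_closedBall (by linarith) hx))
    · exact Metric.closedBall_subset_closedBall (by linarith)
  have hmono : (∫ x in K', φ x * (s * T x)) ≤ ∫ x in K, φ x * (s * T x) := by
    refine setIntegral_mono_set hint ?_ ?_
    · exact (ae_restrict_iff' measurableSet_closedBall).2 (ae_of_all _ hnonneg)
    · exact HasSubset.Subset.eventuallyLE (Metric.closedBall_subset_closedBall (by linarith))
  have hvol : 0 < (volume K').toReal := by
    refine ENNReal.toReal_pos (Metric.measure_closedBall_pos volume x₀ (by linarith)).ne'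
      (measure_closedBall_lt_top).ne
  have hpos : 0 < ∫ x in K, φ x * (s * T x) := by
    calc (0:ℝ) < |c| / 2 * (volume K').toReal := by positivity
    _ ≤ ∫ x in K', φ x * (s * T x) := hlow
    _ ≤ _ := hmono
  have heq : (∫ x in K, φ x * (s * T x)) = s * ∫ x in K, φ x * T x := by
    rw [← integral_const_mul]
    congr 1; ext x; ring
  rw [hred]
  intro hzero
  rw [heq, hzero, mul_zero] at hpos
  exact lt_irrefl _ hpos
end

section
/- Let 1 ≤ l < m ≤ n and let S be an n×n real symmetric matrix in K_m. Then the strict inequality T_m(S)^{1/m} < T_l(S)^{1/l} holds. -/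
open MeasureTheory Finset Filter Topology

section MaclaurinAux

open Finset Polynomial

variable {ι : Type} [Fintype ι] [DecidableEq ι]

lemma det_piecewise_one (S : Matrix ι ι ℝ) (A : Finset ι) :
    Matrix.det (A.piecewise S (1 : Matrix ι ι ℝ)) =
      (S.submatrix (fun i : {x // x ∈ A} => (i : ι)) (fun j : {x // x ∈ A} => (j : ι))).det := by
  classical
  set N : Matrix ι ι ℝ := A.piecewise S (1 : Matrix ι ι ℝ) with hN
  have e : {x // x ∈ A} ⊕ {x // ¬ x ∈ A} ≃ ι := Equiv.sumCompl (· ∈ A)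
  rw [← Matrix.det_submatrix_equiv_self (Equiv.sumCompl (· ∈ A)) N]
  have hsub : N.submatrix (Equiv.sumCompl (· ∈ A)) (Equiv.sumCompl (· ∈ A)) =
      Matrix.fromBlocks
        (S.submatrix (fun i : {x // x ∈ A} => (i : ι)) (fun j : {x // x ∈ A} => (j : ι)))
        (S.submatrix (fun i : {x // x ∈ A} => (i : ι)) (fun j : {x // ¬ x ∈ A} => (j : ι)))
        0 (1 : Matrix {x // ¬ x ∈ A} {x // ¬ x ∈ A} ℝ) := by
    ext i j
    cases i with
    | inl i =>
      cases j with
      | inl j => rw [Matrix.submatrix_apply]; simp [hN, Finset.piecewise, i.2]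
      | inr j => rw [Matrix.submatrix_apply]; simp [hN, Finset.piecewise, i.2]
    | inr i =>
      cases j with
      | inl j =>
        have hij : (i : ι) ≠ (j : ι) := by
          intro h
          exact i.2 (h ▸ j.2)
        rw [Matrix.submatrix_apply]; simp [hN, Finset.piecewise, i.2, Matrix.one_apply, hij]
      | inr j =>
        by_cases h : (i : ι) = (j : ι)
        · have : i = j := Subtype.ext h
          rw [Matrix.submatrix_apply]; simp [hN, Finset.piecewise, i.2, j.2, Matrix.one_apply, this]
        · have : i ≠ j := fun hc => h (congrArg _ hc)
          rw [Matrix.submatrix_apply]; simp [hN, Finset.piecewise, i.2, Matrix.one_apply, h, this]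
  rw [hsub, Matrix.det_fromBlocks_zero₂₁, Matrix.det_one, mul_one]

lemma det_one_add_smul_expand (S : Matrix ι ι ℝ) (t : ℝ) :
    Matrix.det (1 + t • S) = ∑ A : Finset ι, t ^ A.card *
      (S.submatrix (fun i : {x // x ∈ A} => (i : ι)) (fun j : {x // x ∈ A} => (j : ι))).det := by
  classical
  have key : ∀ A : Finset ι,
      (Matrix.detRowAlternating (R := ℝ) (n := ι)).toMultilinearMap
        (A.piecewise (t • S : Matrix ι ι ℝ) (1 : Matrix ι ι ℝ)) =
      t ^ A.card * (S.submatrix (fun i : {x // x ∈ A} => (i : ι))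
        (fun j : {x // x ∈ A} => (j : ι))).det := by
    intro A
    set f := (Matrix.detRowAlternating (R := ℝ) (n := ι)).toMultilinearMap with hf
    set M : Matrix ι ι ℝ := A.piecewise S (1 : Matrix ι ι ℝ) with hM
    have h4 : A.piecewise (fun i => (fun _ : ι => t) i • M i) M =
        A.piecewise (t • S : Matrix ι ι ℝ) (1 : Matrix ι ι ℝ) := by
      funext i
      by_cases hi : i ∈ A <;> simp [hM, Finset.piecewise, hi, Matrix.smul_apply]
      rfl
    rw [← h4, f.map_piecewise_smul (fun _ : ι => t) M A, Finset.prod_const,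
      smul_eq_mul, ← det_piecewise_one S A]
    rfl
  calc Matrix.det (1 + t • S)
      = (Matrix.detRowAlternating (R := ℝ) (n := ι)).toMultilinearMap
          ((t • S : Matrix ι ι ℝ) + (1 : Matrix ι ι ℝ)) := by rw [add_comm]; rfl
    _ = ∑ A : Finset ι, (Matrix.detRowAlternating (R := ℝ) (n := ι)).toMultilinearMap
          (A.piecewise (t • S : Matrix ι ι ℝ) (1 : Matrix ι ι ℝ)) :=
        MultilinearMap.map_add_univ _ _ _
    _ = ∑ A : Finset ι, t ^ A.card * (S.submatrix (fun i : {x // x ∈ A} => (i : ι))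
          (fun j : {x // x ∈ A} => (j : ι))).det := Finset.sum_congr rfl fun A _ => key A

lemma det_one_add_smul_trMinor (S : Matrix ι ι ℝ) (t : ℝ) :
    Matrix.det (1 + t • S) =
      ∑ p ∈ Finset.range (Fintype.card ι + 1), t ^ p * trMinor p S := by
  rw [det_one_add_smul_expand, ← Finset.powerset_univ, Finset.sum_powerset]
  rw [show (Finset.univ : Finset ι).card = Fintype.card ι from rfl]
  refine Finset.sum_congr rfl fun p _ => ?_
  rw [trMinor, Finset.mul_sum]
  refine Finset.sum_congr rfl fun A hA => ?_
  rw [(Finset.mem_powersetCard.1 hA).2]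

lemma trMinor_diagonal (lam : ι → ℝ) (p : ℕ) :
    trMinor p (Matrix.diagonal lam) =
      ∑ A ∈ Finset.powersetCard p (Finset.univ : Finset ι), ∏ i ∈ A, lam i := by
  refine Finset.sum_congr rfl fun A _ => ?_
  rw [Matrix.submatrix_diagonal lam _ Subtype.coe_injective, Matrix.det_diagonal]
  rw [← Finset.prod_attach A (fun i => lam i)]
  rfl

lemma det_conj_unitary (U : Matrix.unitaryGroup ι ℝ) (X : Matrix ι ι ℝ) :
    Matrix.det ((U : Matrix ι ι ℝ) * X * (star U : Matrix ι ι ℝ)) = Matrix.det X := by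
  rw [Matrix.det_mul, Matrix.det_mul]
  have h : (U : Matrix ι ι ℝ) * (star U : Matrix ι ι ℝ) = 1 := U.2.2
  calc (U : Matrix ι ι ℝ).det * X.det * (star U : Matrix ι ι ℝ).det
      = ((U : Matrix ι ι ℝ).det * (star U : Matrix ι ι ℝ).det) * X.det := by ring
    _ = ((U : Matrix ι ι ℝ) * (star U : Matrix ι ι ℝ)).det * X.det := by rw [Matrix.det_mul]
    _ = X.det := by rw [h, Matrix.det_one, one_mul]

theorem trMinor_eq_esymm {S : Matrix ι ι ℝ} (hS : S.IsHermitian) {p : ℕ}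
    (hp : p ∈ Finset.range (Fintype.card ι + 1)) :
    trMinor p S = (Multiset.map hS.eigenvalues Finset.univ.val).esymm p := by
  classical
  set lam := hS.eigenvalues with hlam
  -- identical determinants
  have hdet : ∀ t : ℝ, Matrix.det (1 + t • S) = Matrix.det (1 + t • Matrix.diagonal lam) := by
    intro t
    have hsp := hS.spectral_theorem
    have hdiag : (Matrix.diagonal (RCLike.ofReal ∘ lam) : Matrix ι ι ℝ) = Matrix.diagonal lam := by
      congr 1
    conv_lhs => rw [hsp, hdiag]
    have hU : (1 : Matrix ι ι ℝ) + t • ((hS.eigenvectorUnitary : Matrix ι ι ℝ) *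
        Matrix.diagonal lam * (star hS.eigenvectorUnitary : Matrix ι ι ℝ)) =
        (hS.eigenvectorUnitary : Matrix ι ι ℝ) * (1 + t • Matrix.diagonal lam) *
          (star hS.eigenvectorUnitary : Matrix ι ι ℝ) := by
      have h1 : (hS.eigenvectorUnitary : Matrix ι ι ℝ) *
          (star hS.eigenvectorUnitary : Matrix ι ι ℝ) = 1 := hS.eigenvectorUnitary.2.2
      rw [Matrix.mul_add, Matrix.add_mul, Matrix.mul_one, h1]
      rw [Matrix.mul_smul, Matrix.smul_mul]
    rw [Unitary.conjStarAlgAut_apply, hU, det_conj_unitary]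
  -- polynomial identity
  set n := Fintype.card ι with hn
  set P : Polynomial ℝ := ∑ q ∈ Finset.range (n + 1), C (trMinor q S) * X ^ q with hP
  set Q : Polynomial ℝ := ∑ q ∈ Finset.range (n + 1),
    C ((Multiset.map lam Finset.univ.val).esymm q) * X ^ q with hQ
  have hPQ : P = Q := by
    apply Polynomial.funext
    intro t
    rw [hP, hQ, Polynomial.eval_finset_sum, Polynomial.eval_finset_sum]
    simp only [Polynomial.eval_mul, Polynomial.eval_C, Polynomial.eval_pow, Polynomial.eval_X]
    have h1 : ∑ q ∈ Finset.range (n + 1), trMinor q S * t ^ q = Matrix.det (1 + t • S) := by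
      rw [det_one_add_smul_trMinor]
      exact Finset.sum_congr rfl fun q _ => by ring
    have h2 : ∑ q ∈ Finset.range (n + 1), (Multiset.map lam Finset.univ.val).esymm q * t ^ q =
        Matrix.det (1 + t • Matrix.diagonal lam) := by
      rw [det_one_add_smul_trMinor]
      refine Finset.sum_congr rfl fun q _ => ?_
      rw [trMinor_diagonal, Finset.esymm_map_val]
      ring
    rw [h1, h2, hdet]
  have hcoeff : P.coeff p = Q.coeff p := by rw [hPQ]
  have hcP : P.coeff p = trMinor p S := by
    rw [hP, Polynomial.finset_sum_coeff]
    simp only [Polynomial.coeff_C_mul, Polynomial.coeff_X_pow]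
    rw [Finset.sum_eq_single p]
    · simp
    · intro q _ hq; simp [hq, Ne.symm hq]
    · intro h; exact absurd hp h
  have hcQ : Q.coeff p = (Multiset.map lam Finset.univ.val).esymm p := by
    rw [hQ, Polynomial.finset_sum_coeff]
    simp only [Polynomial.coeff_C_mul, Polynomial.coeff_X_pow]
    rw [Finset.sum_eq_single p]
    · simp
    · intro q _ hq; simp [hq, Ne.symm hq]
    · intro h; exact absurd hp h
  rw [← hcP, hcoeff, hcQ]

lemma esymm_deriv_step (s : Multiset ℝ) (M : ℕ) (hcard : Multiset.card s = M + 1) :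
    ∃ t : Multiset ℝ, Multiset.card t = M ∧
      ∀ j, j ≤ M → ((M : ℝ) + 1) * t.esymm j = (((M : ℝ) + 1) - (j : ℝ)) * s.esymm j := by
  classical
  set f := (Multiset.map (fun r => X - C r) s).prod with hf
  have hmon : f.Monic :=
    Polynomial.monic_multiset_prod_of_monic _ _ fun r _ => monic_X_sub_C r
  have hdeg : f.natDegree = M + 1 := by
    rw [hf, Polynomial.natDegree_multiset_prod_of_monic]
    · simp [Multiset.map_map, Function.comp_def, hcard]
      omega
    · intro p hp
      obtain ⟨r, _, rfl⟩ := Multiset.mem_map.1 hp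
      exact monic_X_sub_C r
  have hroots : f.roots = s := Polynomial.roots_multiset_prod_X_sub_C s
  set g := derivative f with hg
  have h1 : Multiset.card g.roots ≤ g.natDegree := Polynomial.card_roots' g
  have h2 : g.natDegree ≤ M := by
    have h := Polynomial.natDegree_derivative_le f
    rw [hdeg, ← hg] at h
    omega
  have h3 : M + 1 ≤ Multiset.card g.roots + 1 := by
    have h := Polynomial.card_roots_le_derivative f
    rw [hroots, hcard, ← hg] at h
    omega
  have hcardt : Multiset.card g.roots = M := by omega
  have hgdeg : g.natDegree = M := by omega
  have hlead : g.leadingCoeff = (M : ℝ) + 1 := by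
    rw [Polynomial.leadingCoeff, hgdeg, hg, Polynomial.coeff_derivative, ← hdeg,
      hmon.coeff_natDegree, one_mul]
  have hfact : C g.leadingCoeff * (Multiset.map (fun a => X - C a) g.roots).prod = g :=
    Polynomial.C_leadingCoeff_mul_prod_multiset_X_sub_C (by omega)
  refine ⟨g.roots, hcardt, ?_⟩
  intro j hj
  have hd : g.coeff (M - j) = f.coeff (M + 1 - j) * ((M : ℝ) + 1 - j) := by
    rw [hg, Polynomial.coeff_derivative]
    have : M - j + 1 = M + 1 - j := by omega
    rw [this]
    congr 1
    rw [Nat.cast_sub hj]; ring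
  have hcf : f.coeff (M + 1 - j) = (-1 : ℝ) ^ j * s.esymm j := by
    have hk : M + 1 - j ≤ Multiset.card s := by omega
    have := Multiset.prod_X_sub_C_coeff s hk
    rw [← hf] at this
    rw [this, hcard]
    congr 2 <;> omega
  have hct : (Multiset.map (fun a => X - C a) g.roots).prod.coeff (M - j) =
      (-1 : ℝ) ^ j * (g.roots).esymm j := by
    have hk : M - j ≤ Multiset.card g.roots := by omega
    have := Multiset.prod_X_sub_C_coeff g.roots hk
    rw [this, hcardt]
    congr 2 <;> omega
  have hgc : g.coeff (M - j) = ((M : ℝ) + 1) * ((-1 : ℝ) ^ j * (g.roots).esymm j) := by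
    conv_lhs => rw [← hfact]
    rw [Polynomial.coeff_C_mul, hct, hlead]
  have hne : ((-1 : ℝ)) ^ j ≠ 0 := pow_ne_zero _ (by norm_num)
  apply mul_left_cancel₀ hne
  rw [hd, hcf] at hgc
  linear_combination -hgc

/-- sum over (card-1)-subsets equals sum of products over erasures -/
lemma sum_prod_erase (s : Finset ι) (hs : s.Nonempty) (g : ι → ℝ) :
    ∑ B ∈ Finset.powersetCard (s.card - 1) s, ∏ l ∈ B, g l
      = ∑ k ∈ s, ∏ l ∈ s.erase k, g l := by
  classical
  have himg : Finset.powersetCard (s.card - 1) s = s.image (fun k => s.erase k) := by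
    ext B
    simp only [Finset.mem_powersetCard, Finset.mem_image]
    constructor
    · rintro ⟨hBs, hBcard⟩
      have hcd : (s \ B).card = 1 := by
        rw [Finset.card_sdiff_of_subset hBs, hBcard]
        have := Finset.card_pos.2 hs
        omega
      obtain ⟨i, hi⟩ := Finset.card_eq_one.1 hcd
      have his : i ∈ s := by
        have : i ∈ s \ B := hi ▸ Finset.mem_singleton_self i
        exact (Finset.mem_sdiff.1 this).1
      refine ⟨i, his, ?_⟩
      have hB : B = s \ {i} := by
        rw [← hi, Finset.sdiff_sdiff_eq_self hBs]
      rw [hB, Finset.sdiff_singleton_eq_erase]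
    · rintro ⟨i, his, rfl⟩
      refine ⟨Finset.erase_subset _ _, ?_⟩
      rw [Finset.card_erase_of_mem his]
  rw [himg, Finset.sum_image]
  intro a ha b hb hab
  by_contra hne
  have : a ∈ s.erase b := Finset.mem_erase.2 ⟨hne, ha⟩
  rw [← show s.erase a = s.erase b from hab] at this
  exact absurd rfl (Finset.mem_erase.1 this).1

lemma newton_base (j : ℕ) (g : Fin (j + 2) → ℝ) :
    2 * ((j : ℝ) + 2) *
        ((∑ A ∈ Finset.powersetCard j (Finset.univ : Finset (Fin (j+2))), ∏ i ∈ A, g i) *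
         (∑ A ∈ Finset.powersetCard (j+2) (Finset.univ : Finset (Fin (j+2))), ∏ i ∈ A, g i))
      ≤ ((j : ℝ) + 1) *
        (∑ A ∈ Finset.powersetCard (j+1) (Finset.univ : Finset (Fin (j+2))), ∏ i ∈ A, g i) ^ 2 := by
  classical
  set a : Fin (j+2) → ℝ := fun i => ∏ l ∈ Finset.univ.erase i, g l with ha
  set T : ℝ := ∑ i, a i with hT
  set Q : ℝ := ∑ i, (a i) ^ 2 with hQ
  -- E_{j+1} = T
  have hE1 : (∑ A ∈ Finset.powersetCard (j+1) (Finset.univ : Finset (Fin (j+2))), ∏ i ∈ A, g i)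
      = T := by
    have := sum_prod_erase (Finset.univ : Finset (Fin (j+2))) ⟨0, Finset.mem_univ 0⟩ g
    rw [Finset.card_univ, Fintype.card_fin] at this
    simpa using this
  -- E_{j+2} = prod
  have hE2 : (∑ A ∈ Finset.powersetCard (j+2) (Finset.univ : Finset (Fin (j+2))), ∏ i ∈ A, g i)
      = ∏ i, g i := by
    have h : Finset.powersetCard (j+2) (Finset.univ : Finset (Fin (j+2))) = {Finset.univ} := by
      have := Finset.powersetCard_self (Finset.univ : Finset (Fin (j+2)))
      rwa [Finset.card_univ, Fintype.card_fin] at this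
    rw [h, Finset.sum_singleton]
  -- pair identity : T^2 - Q = 2 * E_{j+2} * E_j
  have hpair : T ^ 2 - Q = 2 * (∏ i, g i) *
      (∑ A ∈ Finset.powersetCard j (Finset.univ : Finset (Fin (j+2))), ∏ i ∈ A, g i) := by
    have step1 : T ^ 2 - Q = ∑ i, a i * (T - a i) := by
      rw [hT, hQ, sq, Finset.sum_mul, ← Finset.sum_sub_distrib]
      refine Finset.sum_congr rfl fun i _ => ?_
      ring
    have step2 : ∀ i, T - a i = ∑ k ∈ Finset.univ.erase i, a k := by
      intro i
      rw [hT, ← Finset.add_sum_erase _ a (Finset.mem_univ i)]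
      ring
    have hak : ∀ i : Fin (j+2), ∀ k ∈ Finset.univ.erase i,
        a i * a k = (∏ l, g l) * ∏ l ∈ (Finset.univ.erase i).erase k, g l := by
      intro i k hk
      have hki : k ≠ i := (Finset.mem_erase.1 hk).1
      have hik : i ∈ Finset.univ.erase k := Finset.mem_erase.2 ⟨Ne.symm hki, Finset.mem_univ i⟩
      have e1 : a i = g k * ∏ l ∈ (Finset.univ.erase i).erase k, g l := by
        rw [ha]
        exact (Finset.mul_prod_erase _ g hk).symm
      have e2 : a k = g i * ∏ l ∈ (Finset.univ.erase i).erase k, g l := by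
        rw [ha, Finset.erase_right_comm]
        exact (Finset.mul_prod_erase _ g hik).symm
      have e3 : (∏ l, g l) = g i * (g k * ∏ l ∈ (Finset.univ.erase i).erase k, g l) := by
        rw [← e1, ha, Finset.mul_prod_erase _ g (Finset.mem_univ i)]
      rw [e1, e2, e3]
      ring
    have inner : ∀ i : Fin (j+2), ∑ k ∈ Finset.univ.erase i,
        ∏ l ∈ (Finset.univ.erase i).erase k, g l
        = ∑ B ∈ Finset.powersetCard j (Finset.univ.erase i), ∏ l ∈ B, g l := by
      intro i
      have hcard : (Finset.univ.erase i).card = j + 1 := by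
        rw [Finset.card_erase_of_mem (Finset.mem_univ i), Finset.card_univ, Fintype.card_fin]
        omega
      have hne : (Finset.univ.erase i).Nonempty := Finset.card_pos.1 (by rw [hcard]; omega)
      have := sum_prod_erase (Finset.univ.erase i) hne g
      rw [hcard] at this
      simpa using this.symm
    have hps : ∀ i : Fin (j+2), Finset.powersetCard j (Finset.univ.erase i)
        = (Finset.powersetCard j (Finset.univ : Finset (Fin (j+2)))).filter
            (fun B => i ∉ B) := by
      intro i
      ext B
      simp only [Finset.mem_powersetCard, Finset.subset_erase, Finset.mem_filter,
        Finset.subset_univ, true_and]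
      tauto
    have hcount : ∑ i : Fin (j+2), ∑ B ∈ Finset.powersetCard j (Finset.univ.erase i),
        ∏ l ∈ B, g l
        = 2 * ∑ B ∈ Finset.powersetCard j (Finset.univ : Finset (Fin (j+2))), ∏ l ∈ B, g l := by
      simp_rw [hps, Finset.sum_filter]
      rw [Finset.sum_comm, Finset.mul_sum]
      refine Finset.sum_congr rfl fun B hB => ?_
      rw [← Finset.sum_filter, Finset.sum_const, nsmul_eq_mul]
      have hBc : B.card = j := (Finset.mem_powersetCard.1 hB).2
      have : (Finset.univ.filter (fun i => i ∉ B)).card = 2 := by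
        rw [← Finset.sdiff_eq_filter, Finset.card_sdiff_of_subset (Finset.subset_univ B),
          Finset.card_univ, Fintype.card_fin, hBc]
        omega
      rw [this]
      norm_num
    calc T ^ 2 - Q = ∑ i, a i * (T - a i) := step1
      _ = ∑ i, ∑ k ∈ Finset.univ.erase i, a i * a k := by
          refine Finset.sum_congr rfl fun i _ => ?_
          rw [step2 i, Finset.mul_sum]
      _ = ∑ i : Fin (j+2), ∑ k ∈ Finset.univ.erase i,
            (∏ l, g l) * ∏ l ∈ (Finset.univ.erase i).erase k, g l := by
          refine Finset.sum_congr rfl fun i _ => Finset.sum_congr rfl fun k hk => hak i k hk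
      _ = (∏ l, g l) * ∑ i : Fin (j+2), ∑ k ∈ Finset.univ.erase i,
            ∏ l ∈ (Finset.univ.erase i).erase k, g l := by
          rw [Finset.mul_sum]
          exact Finset.sum_congr rfl fun i _ => (Finset.mul_sum _ _ _).symm
      _ = (∏ l, g l) * (2 * ∑ B ∈ Finset.powersetCard j (Finset.univ : Finset (Fin (j+2))),
            ∏ l ∈ B, g l) := by
          rw [← hcount]
          congr 1
          exact Finset.sum_congr rfl fun i _ => inner i
      _ = 2 * (∏ i, g i) *
          (∑ A ∈ Finset.powersetCard j (Finset.univ : Finset (Fin (j+2))), ∏ i ∈ A, g i) := by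
          ring
  -- Cauchy-Schwarz
  have hCS : T ^ 2 ≤ ((j : ℝ) + 2) * Q := by
    have := sq_sum_le_card_mul_sum_sq (s := (Finset.univ : Finset (Fin (j+2)))) (f := a)
    rw [Finset.card_univ, Fintype.card_fin] at this
    rw [hT, hQ]
    push_cast at this ⊢
    convert this using 2
  rw [hE1, hE2]
  nlinarith [hpair, hCS]

lemma choose_cast_id (M q : ℕ) (h : q ≤ M + 1) :
    (((M+1).choose q : ℕ) : ℝ) * (((M:ℝ)+1) - q) = ((M:ℝ)+1) * ((M.choose q : ℕ) : ℝ) := by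
  have hnat : (M+1).choose q * (M+1-q) = (M+1) * M.choose q := by
    rw [← Nat.choose_succ_right_eq]
    exact (Nat.add_one_mul_choose_eq M q).symm
  have hc := congrArg (Nat.cast (R := ℝ)) hnat
  push_cast [Nat.cast_sub h] at hc
  linarith


lemma newton_step_alg (N c0 c1 c2 b0 b1 b2 e0 e1 e2 f0 f1 f2 x y z : ℝ)
    (hx : 0 < x) (hy : 0 < y) (hz : 0 < z) (hN : 0 ≤ N)
    (hr0 : N * f0 = x * e0) (hr1 : N * f1 = y * e1) (hr2 : N * f2 = z * e2)
    (hid0 : c0 * x = N * b0) (hid1 : c1 * y = N * b1) (hid2 : c2 * z = N * b2)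
    (hIH : b1 ^ 2 * (f0 * f2) ≤ b0 * b2 * f1 ^ 2) :
    c1 ^ 2 * (e0 * e2) ≤ c0 * c2 * e1 ^ 2 := by
  have hF : (0:ℝ) < y ^ 2 * (x * z) := by positivity
  rw [← mul_le_mul_iff_right₀ hF]
  have hIH4 := mul_le_mul_of_nonneg_left hIH (show (0:ℝ) ≤ N ^ 4 by positivity)
  calc y ^ 2 * (x * z) * (c1 ^ 2 * (e0 * e2))
      = (c1 * y) ^ 2 * ((x * e0) * (z * e2)) := by ring
    _ = (N * b1) ^ 2 * ((N * f0) * (N * f2)) := by rw [hid1, ← hr0, ← hr2]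
    _ = N ^ 4 * (b1 ^ 2 * (f0 * f2)) := by ring
    _ ≤ N ^ 4 * (b0 * b2 * f1 ^ 2) := hIH4
    _ = ((N * b0) * (N * b2)) * (N * f1) ^ 2 := by ring
    _ = ((c0 * x) * (c2 * z)) * (y * e1) ^ 2 := by rw [hid0, hid2, hr1]
    _ = y ^ 2 * (x * z) * (c0 * c2 * e1 ^ 2) := by ring

theorem newton_ineq (j d : ℕ) : ∀ s : Multiset ℝ, Multiset.card s = j + 2 + d →
    (((j+2+d).choose (j+1) : ℕ) : ℝ)^2 * (s.esymm j * s.esymm (j+2))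
      ≤ (((j+2+d).choose j : ℕ) : ℝ) * (((j+2+d).choose (j+2) : ℕ) : ℝ) * s.esymm (j+1)^2 := by
  induction d with
  | zero =>
    intro s hcard
    -- transfer to Fin (j+2)
    set l := s.toList with hl
    have hlen : l.length = j + 2 := by rw [hl, Multiset.length_toList, hcard]
    set g : Fin (j+2) → ℝ := fun i => l.get (Fin.cast hlen.symm i) with hg
    have hofn : List.ofFn g = l := by
      apply List.ext_get (by simp [hlen])
      intro k h1 h2
      rw [List.get_ofFn]
      rfl
    have hs : s = Multiset.map g Finset.univ.val := by
      rw [Fin.univ_val_map, hofn, hl, Multiset.coe_toList]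
    have hesymm : ∀ p, s.esymm p =
        ∑ A ∈ Finset.powersetCard p (Finset.univ : Finset (Fin (j+2))), ∏ i ∈ A, g i := by
      intro p
      rw [hs, Finset.esymm_map_val]
    have hbase := newton_base j g
    rw [← hesymm, ← hesymm, ← hesymm] at hbase
    -- binomial values
    have hc1 : (j+2).choose (j+1) = j + 2 := by
      have h := Nat.choose_symm (n := j+2) (k := j+1) (by omega)
      rw [show j+2-(j+1) = 1 by omega, Nat.choose_one_right] at h
      omega
    have hc2 : (j+2).choose (j+2) = 1 := Nat.choose_self _
    have hc0 : (j+2).choose j * 2 = (j+2) * (j+1) := by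
      have h1 := Nat.choose_succ_right_eq (j+2) j
      rw [show j + 2 - j = 2 by omega, hc1] at h1
      omega
    have hidx : j + 2 + 0 = j + 2 := by omega
    rw [hidx, hc1, hc2]
    have h2C : ((j:ℝ)+2) * ((j:ℝ)+1) = 2 * (((j+2).choose j : ℕ) : ℝ) := by
      have := congrArg (Nat.cast (R := ℝ)) hc0
      push_cast at this
      linarith
    have h3 := mul_le_mul_of_nonneg_left hbase (show (0:ℝ) ≤ (j:ℝ)+2 by positivity)
    push_cast
    nlinarith [h3, h2C]
  | succ d ih =>
    intro s hcard
    have hidx : j + 2 + (d + 1) = (j + 2 + d) + 1 := by omega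
    rw [hidx]
    obtain ⟨t, htcard, hrel⟩ := esymm_deriv_step s (j+2+d) (by omega)
    have hIH := ih t htcard
    refine newton_step_alg ((j:ℝ)+3+d) _ _ _ _ _ _ _ _ _ _ _ _
      ((d:ℝ)+3) ((d:ℝ)+2) ((d:ℝ)+1) (by positivity) (by positivity) (by positivity)
      (by positivity) ?_ ?_ ?_ ?_ ?_ ?_ hIH
    · have := hrel j (by omega); push_cast at this ⊢; linear_combination this
    · have := hrel (j+1) (by omega); push_cast at this ⊢; linear_combination this
    · have := hrel (j+2) (by omega); push_cast at this ⊢; linear_combination this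
    · have := choose_cast_id (j+2+d) j (by omega); push_cast at this ⊢; linear_combination this
    · have := choose_cast_id (j+2+d) (j+1) (by omega); push_cast at this ⊢
      linear_combination this
    · have := choose_cast_id (j+2+d) (j+2) (by omega); push_cast at this ⊢
      linear_combination this

/-- step inequality, non-strict -/
lemma chain_B (m : ℕ) (a : ℕ → ℝ) (h0 : a 0 = 0)
    (hconc : ∀ p, 1 ≤ p → p + 1 ≤ m → a (p+1) + a (p-1) ≤ 2 * a p) :
    ∀ q, 1 ≤ q → q + 1 ≤ m → (q : ℝ) * a (q+1) ≤ ((q : ℝ) + 1) * a q := by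
  intro q hq
  induction q, hq using Nat.le_induction with
  | base =>
    intro h2m
    have h := hconc 1 le_rfl h2m
    simp only [Nat.sub_self] at h
    rw [h0] at h
    push_cast
    linarith
  | succ q hq ih =>
    intro hq2m
    have ih' := ih (by omega)
    have h := hconc (q+1) (by omega) (by omega)
    simp only [Nat.add_sub_cancel] at h
    have h1 := mul_le_mul_of_nonneg_left h (show (0:ℝ) ≤ (q:ℝ)+1 by positivity)
    push_cast at ih' ⊢
    linarith
lemma chain_B_lt (m : ℕ) (a : ℕ → ℝ) (h0 : a 0 = 0)
    (hconc : ∀ p, 1 ≤ p → p + 1 ≤ m → a (p+1) + a (p-1) < 2 * a p) :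
    ∀ q, 1 ≤ q → q + 1 ≤ m → (q : ℝ) * a (q+1) < ((q : ℝ) + 1) * a q := by
  intro q hq
  induction q, hq using Nat.le_induction with
  | base =>
    intro h2m
    have h := hconc 1 le_rfl h2m
    simp only [Nat.sub_self] at h
    rw [h0] at h
    push_cast
    linarith
  | succ q hq ih =>
    intro hq2m
    have ih' := ih (by omega)
    have h := hconc (q+1) (by omega) (by omega)
    simp only [Nat.add_sub_cancel] at h
    have h1 := mul_lt_mul_of_pos_left h (show (0:ℝ) < (q:ℝ)+1 by positivity)
    push_cast at ih' ⊢
    linarith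

lemma chain_le (m : ℕ) (a : ℕ → ℝ) (h0 : a 0 = 0)
    (hconc : ∀ p, 1 ≤ p → p + 1 ≤ m → a (p+1) + a (p-1) ≤ 2 * a p) :
    ∀ l k, 1 ≤ l → l ≤ k → k ≤ m → (l : ℝ) * a k ≤ (k : ℝ) * a l := by
  intro l k hl hlk
  induction k, hlk using Nat.le_induction with
  | base => intro _; exact le_refl _
  | succ k hk ih =>
    intro hk1m
    have ih' := ih (by omega)
    have hB := chain_B m a h0 hconc k (by omega) hk1m
    have h1 := mul_le_mul_of_nonneg_left hB (show (0:ℝ) ≤ (l:ℝ) by positivity)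
    have h2 := mul_le_mul_of_nonneg_left ih' (show (0:ℝ) ≤ (k:ℝ)+1 by positivity)
    have hk0 : (0:ℝ) < (k:ℝ) := by
      have : 1 ≤ k := by omega
      exact_mod_cast Nat.cast_pos.2 this
    rw [← mul_le_mul_iff_right₀ hk0]
    push_cast at h1 h2 ⊢
    linarith

lemma chain_lt (m : ℕ) (a : ℕ → ℝ) (h0 : a 0 = 0)
    (hconc : ∀ p, 1 ≤ p → p + 1 ≤ m → a (p+1) + a (p-1) < 2 * a p) :
    ∀ l k, 1 ≤ l → l < k → k ≤ m → (l : ℝ) * a k < (k : ℝ) * a l := by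
  intro l k hl hlk
  have hlk' : l + 1 ≤ k := hlk
  induction k, hlk' using Nat.le_induction with
  | base =>
    intro h1m
    have := chain_B_lt m a h0 hconc l hl (by omega)
    push_cast at this ⊢
    linarith
  | succ k hk ih =>
    intro hk1m
    have ih' := ih (by omega) (by omega)
    have hB := chain_B_lt m a h0 hconc k (by omega) hk1m
    have h1 := mul_le_mul_of_nonneg_left hB.le (show (0:ℝ) ≤ (l:ℝ) by positivity)
    have h2 := mul_lt_mul_of_pos_left ih' (show (0:ℝ) < (k:ℝ)+1 by positivity)
    have hk0 : (0:ℝ) < (k:ℝ) := by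
      have : 1 ≤ k := by omega
      exact_mod_cast Nat.cast_pos.2 this
    rw [← mul_lt_mul_iff_right₀ hk0]
    push_cast at h1 h2 ⊢
    linarith

/-- strict log-concavity of binomial coefficients -/
lemma choose_sq_lt (n j : ℕ) (h : j + 2 ≤ n) :
    ((n.choose j : ℕ) : ℝ) * ((n.choose (j+2) : ℕ) : ℝ) < (((n.choose (j+1) : ℕ) : ℝ)) ^ 2 := by
  have h1 := Nat.choose_succ_right_eq n j
  have h2 := Nat.choose_succ_right_eq n (j+1)
  have hnj : ((n - j : ℕ) : ℝ) = (n : ℝ) - j := Nat.cast_sub (by omega)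
  have hnj1 : ((n - (j+1) : ℕ) : ℝ) = (n : ℝ) - j - 1 := by
    rw [Nat.cast_sub (by omega)]; push_cast; ring
  have h1' := congrArg (Nat.cast (R := ℝ)) h1
  have h2' := congrArg (Nat.cast (R := ℝ)) h2
  push_cast [hnj, hnj1] at h1' h2'
  have hcpos : (0:ℝ) < ((n.choose (j+1) : ℕ) : ℝ) := by
    exact_mod_cast Nat.choose_pos (show j + 1 ≤ n by omega)
  have hu : (2:ℝ) ≤ (n:ℝ) - j := by
    have : (j:ℝ) + 2 ≤ (n:ℝ) := by exact_mod_cast h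
    linarith
  -- multiply target by (n-j)*(j+2) > 0
  have hfac : (0:ℝ) < ((n:ℝ) - j) * ((j:ℝ) + 2) := by positivity
  rw [← mul_lt_mul_iff_right₀ hfac]
  calc ((n:ℝ) - j) * ((j:ℝ) + 2) * (((n.choose j : ℕ) : ℝ) * ((n.choose (j+2) : ℕ) : ℝ))
      = (((n.choose j : ℕ) : ℝ) * ((n:ℝ) - j)) * (((n.choose (j+2) : ℕ) : ℝ) * ((j:ℝ)+2)) := by
        ring
    _ = (((n.choose (j+1) : ℕ) : ℝ) * ((j:ℝ)+1)) *
          (((n.choose (j+1) : ℕ) : ℝ) * ((n:ℝ) - j - 1)) := by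
        rw [← h1', ← h2']
        push_cast
        ring
    _ = (((n.choose (j+1) : ℕ) : ℝ))^2 * (((j:ℝ)+1) * ((n:ℝ) - j - 1)) := by ring
    _ < (((n.choose (j+1) : ℕ) : ℝ))^2 * (((j:ℝ)+2) * ((n:ℝ) - j)) := by
        have hlt : ((j:ℝ)+1) * ((n:ℝ) - j - 1) < ((j:ℝ)+2) * ((n:ℝ) - j) := by nlinarith
        exact mul_lt_mul_of_pos_left hlt (by positivity)
    _ = ((n:ℝ) - j) * ((j:ℝ) + 2) * (((n.choose (j+1) : ℕ) : ℝ)) ^ 2 := by ring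

lemma multiset_esymm_zero (s : Multiset ℝ) : s.esymm 0 = 1 := by
  rw [Multiset.esymm, Multiset.powersetCard_zero_left]
  simp


end MaclaurinAux

/-- the strong (coefficient-free) Maclaurin inequality on `K_m`. -/
theorem stmt_16 (n l m : ℕ) (hl1 : 1 ≤ l) (hlm : l < m) (hmn : m ≤ n)
    (S : Matrix (Fin n) (Fin n) ℝ) (hSsymm : S.IsSymm)
    (hS : ∀ p, 1 ≤ p → p ≤ m → 0 < trMinor p S) :
    (trMinor m S) ^ ((1 : ℝ) / (m : ℝ)) < (trMinor l S) ^ ((1 : ℝ) / (l : ℝ)) := by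
  classical
  have hHerm : S.IsHermitian := by
    rw [Matrix.IsHermitian, Matrix.conjTranspose_eq_transpose_of_trivial]
    exact hSsymm
  set s : Multiset ℝ := Multiset.map hHerm.eigenvalues Finset.univ.val with hs
  have hcard : Multiset.card s = n := by
    rw [hs, Multiset.card_map]
    exact Finset.card_univ.trans (Fintype.card_fin n)
  have hT : ∀ p, p ≤ n → trMinor p S = s.esymm p := by
    intro p hp
    exact trMinor_eq_esymm hHerm (by simp [Fintype.card_fin]; omega)
  -- positivity of esymm
  have hEpos : ∀ p, p ≤ m → 0 < s.esymm p := by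
    intro p hp
    rcases Nat.eq_zero_or_pos p with h | h
    · rw [h, multiset_esymm_zero]; norm_num
    · rw [← hT p (by omega)]
      exact hS p h hp
  have hcpos : ∀ p, p ≤ n → (0:ℝ) < ((n.choose p : ℕ) : ℝ) := by
    intro p hp
    exact_mod_cast Nat.choose_pos hp
  -- gamma and beta sequences
  set A : ℕ → ℝ := fun p => Real.log (s.esymm p) - Real.log ((n.choose p : ℕ) : ℝ) with hA
  set B : ℕ → ℝ := fun p => Real.log ((n.choose p : ℕ) : ℝ) with hB
  have hA0 : A 0 = 0 := by
    rw [hA]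
    simp [multiset_esymm_zero]
  have hB0 : B 0 = 0 := by rw [hB]; simp
  -- concavity of A from Newton
  have hconcA : ∀ p, 1 ≤ p → p + 1 ≤ m → A (p+1) + A (p-1) ≤ 2 * A p := by
    intro p hp hpm
    have hN := newton_ineq (p-1) (n-(p+1)) s (by omega)
    rw [show p-1+2+(n-(p+1)) = n by omega, show p-1+2 = p+1 by omega,
      show p-1+1 = p by omega] at hN
    have he0 : 0 < s.esymm (p-1) := hEpos _ (by omega)
    have he1 : 0 < s.esymm p := hEpos _ (by omega)
    have he2 : 0 < s.esymm (p+1) := hEpos _ (by omega)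
    have hc0 := hcpos (p-1) (by omega)
    have hc1 := hcpos p (by omega)
    have hc2 := hcpos (p+1) (by omega)
    have hposL : (0:ℝ) < ((n.choose p : ℕ) : ℝ)^2 * (s.esymm (p-1) * s.esymm (p+1)) := by
      positivity
    have hL := Real.log_le_log hposL hN
    rw [Real.log_mul (by positivity) (by positivity),
      Real.log_mul (by positivity) (by positivity),
      Real.log_mul (by positivity) (by positivity),
      Real.log_mul (by positivity) (by positivity),
      Real.log_pow, Real.log_pow] at hL
    rw [hA]
    push_cast at hL ⊢
    linarith
  have hconcB : ∀ p, 1 ≤ p → p + 1 ≤ m → B (p+1) + B (p-1) < 2 * B p := by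
    intro p hp hpm
    have hN := choose_sq_lt n (p-1) (by omega)
    rw [show p-1+2 = p+1 by omega, show p-1+1 = p by omega] at hN
    have hc0 := hcpos (p-1) (by omega)
    have hc1 := hcpos p (by omega)
    have hc2 := hcpos (p+1) (by omega)
    have hL := Real.log_lt_log (by positivity) hN
    rw [Real.log_mul (by positivity) (by positivity), Real.log_pow] at hL
    rw [hB]
    push_cast at hL ⊢
    linarith
  have hchA := chain_le m A hA0 hconcA l m hl1 (le_of_lt hlm) le_rfl
  have hchB := chain_lt m B hB0 hconcB l m hl1 hlm le_rfl
  -- combine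
  have hkey : (l:ℝ) * Real.log (s.esymm m) < (m:ℝ) * Real.log (s.esymm l) := by
    simp only [hA, hB] at hchA hchB
    linarith [hchA, hchB]
  have hTm : trMinor m S = s.esymm m := hT m (by omega)
  have hTl : trMinor l S = s.esymm l := hT l (by omega)
  have hem : 0 < s.esymm m := hEpos m le_rfl
  have hel : 0 < s.esymm l := hEpos l (by omega)
  rw [hTm, hTl, Real.rpow_def_of_pos hem, Real.rpow_def_of_pos hel]
  apply Real.exp_lt_exp.2
  have hl0 : (0:ℝ) < (l:ℝ) := by exact_mod_cast hl1
  have hm0 : (0:ℝ) < (m:ℝ) := by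
    have : 1 ≤ m := by omega
    exact_mod_cast this
  rw [mul_one_div, mul_one_div, div_lt_div_iff₀ hm0 hl0]
  nlinarith [hkey]
end
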